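/- Deletion of grammar-redundant relational atoms: if R, uR_xv, Γ ⊢ w : A is derivable in L_Σ(𝒜) and there exists a propagation path π(u,v) in PG(R) with s_π(u,v) ∈ L_{g(𝒜)}(x), then R, Γ ⊢ w : A is derivable in L_Σ(𝒜). -/

import Mathlib

namespace IGL

/-- An alphabet Σ: a nonempty countable type of characters partitioned into a
forward part and a backward part by an involutive converse operation. -/
structure Alphabet where
  Char : Type
  nonempty : Nonempty Char
  countable : Countable Char
  fwd : Char → Prop
  conv : Char → Char
  conv_conv : ∀ x, conv (conv x) = x
  fwd_iff : ∀ x, fwd x ↔ ¬ fwd (conv x)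

/-- Formulae of the intuitionistic multi-modal language `L_Σ`. -/
inductive Formula (C : Type) : Type
  | atom : ℕ → Formula C
  | bot  : Formula C
  | or   : Formula C → Formula C → Formula C
  | and  : Formula C → Formula C → Formula C
  | imp  : Formula C → Formula C → Formula C
  | dia  : C → Formula C → Formula C
  | box  : C → Formula C → Formula C

namespace Formula
/-- Intuitionistic negation `¬A := A ⊃ ⊥`. -/
def neg {C : Type} (A : Formula C) : Formula C := A.imp Formula.bot
/-- `A ≡ B := (A ⊃ B) ∧ (B ⊃ A)`. -/
def equiv {C : Type} (A B : Formula C) : Formula C := (A.imp B).and (B.imp A)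
end Formula

/-- Bi-relational Σ-models. -/
structure BiModel (α : Alphabet) where
  W : Type
  nonempty : Nonempty W
  le : W → W → Prop
  le_refl : ∀ w, le w w
  le_trans : ∀ w u v, le w u → le u v → le w v
  R : α.Char → W → W → Prop
  F1 : ∀ x w v v', R x w v → le v v' → ∃ w', le w w' ∧ R x w' v'
  F2 : ∀ x w w' v, le w w' → R x w v → ∃ v', R x w' v' ∧ le v v'
  F3 : ∀ x w u, R x w u ↔ R (α.conv x) u w
  V : W → ℕ → Prop
  mono : ∀ w u, le w u → ∀ p, V w p → V u p

/-- Satisfaction `M,w ⊩ A`. -/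
def Sat {α : Alphabet} (M : BiModel α) : M.W → Formula α.Char → Prop
  | w, Formula.atom p => M.V w p
  | _, Formula.bot => False
  | w, Formula.or A B => Sat M w A ∨ Sat M w B
  | w, Formula.and A B => Sat M w A ∧ Sat M w B
  | w, Formula.imp A B => ∀ w', M.le w w' → Sat M w' A → Sat M w' B
  | w, Formula.dia x A => ∃ v, M.R x w v ∧ Sat M v A
  | w, Formula.box x A => ∀ w' v', M.le w w' → M.R x w' v' → Sat M v' A

/-- Axioms: seriality axioms `D_x` or intuitionistic path axioms
`(⟨x₁⟩⋯⟨xₙ⟩A ⊃ ⟨x⟩A) ∧ ([x]A ⊃ [x₁]⋯[xₙ]A)`, encoded by the character `x`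
and the string `[x₁,…,xₙ]`. -/
inductive Ax (C : Type) : Type
  | ser : C → Ax C
  | ipa : C → List C → Ax C

/-- Composition of the accessibility relations along a string. -/
def BiModel.Rs {α : Alphabet} (M : BiModel α) : List α.Char → M.W → M.W → Prop
  | [], w, u => w = u
  | x :: s, w, u => ∃ v, M.R x w v ∧ M.Rs s v u

/-- The frame condition corresponding to an axiom. -/
def SatisfiesAx {α : Alphabet} (M : BiModel α) : Ax α.Char → Prop
  | Ax.ser x => ∀ w, ∃ u, M.R x w u
  | Ax.ipa x s => ∀ w u, M.Rs s w u → M.R x w u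

/-- A bi-relational (Σ,𝒜)-model. -/
def AModel {α : Alphabet} (𝒜 : Set (Ax α.Char)) (M : BiModel α) : Prop :=
  ∀ a ∈ 𝒜, SatisfiesAx M a

/-- `⟨x₁⟩⋯⟨xₙ⟩A`. -/
def dias {C : Type} : List C → Formula C → Formula C
  | [], A => A
  | x :: s, A => Formula.dia x (dias s A)

/-- `[x₁]⋯[xₙ]A`. -/
def boxes {C : Type} : List C → Formula C → Formula C
  | [], A => A
  | x :: s, A => Formula.box x (boxes s A)

/-- The Hilbert system `H IK_m(Σ,𝒜)`. -/
inductive Hprf (α : Alphabet) (𝒜 : Set (Ax α.Char)) : Formula α.Char → Prop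
  | ipl1 (A B : Formula α.Char) : Hprf α 𝒜 (A.imp (B.imp A))
  | ipl2 (A B C : Formula α.Char) : Hprf α 𝒜 ((A.imp (B.imp C)).imp ((A.imp B).imp (A.imp C)))
  | ipl3 (A B : Formula α.Char) : Hprf α 𝒜 (A.imp (A.or B))
  | ipl4 (A B : Formula α.Char) : Hprf α 𝒜 (B.imp (A.or B))
  | ipl5 (A B C : Formula α.Char) : Hprf α 𝒜 ((A.imp C).imp ((B.imp C).imp ((A.or B).imp C)))
  | ipl6 (A B : Formula α.Char) : Hprf α 𝒜 ((A.and B).imp A)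
  | ipl7 (A B : Formula α.Char) : Hprf α 𝒜 ((A.and B).imp B)
  | ipl8 (A B : Formula α.Char) : Hprf α 𝒜 (A.imp (B.imp (A.and B)))
  | ipl9 (A : Formula α.Char) : Hprf α 𝒜 (Formula.bot.imp A)
  | axK (x : α.Char) (A B : Formula α.Char) : Hprf α 𝒜 ((Formula.box x (A.imp B)).imp ((Formula.box x A).imp (Formula.box x B)))
  | axBoxAnd (x : α.Char) (A B : Formula α.Char) : Hprf α 𝒜 ((Formula.box x (A.and B)).equiv ((Formula.box x A).and (Formula.box x B)))
  | axDiaOr (x : α.Char) (A B : Formula α.Char) : Hprf α 𝒜 ((Formula.dia x (A.or B)).equiv ((Formula.dia x A).or (Formula.dia x B)))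
  | axKdia (x : α.Char) (A B : Formula α.Char) : Hprf α 𝒜 ((Formula.box x (A.imp B)).imp ((Formula.dia x A).imp (Formula.dia x B)))
  | axBoxDia (x : α.Char) (A B : Formula α.Char) : Hprf α 𝒜 (((Formula.box x A).and (Formula.dia x B)).imp (Formula.dia x (A.and B)))
  | axNotDiaBot (x : α.Char) : Hprf α 𝒜 (Formula.dia x Formula.bot).neg
  | axConv (x : α.Char) (A : Formula α.Char) : Hprf α 𝒜 ((A.imp (Formula.box x (Formula.dia (α.conv x) A))).and
      ((Formula.dia x (Formula.box (α.conv x) A)).imp A))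
  | axFS (x : α.Char) (A B : Formula α.Char) : Hprf α 𝒜 (((Formula.dia x A).imp (Formula.box x B)).imp (Formula.box x (A.imp B)))
  | axDiaImp (x : α.Char) (A B : Formula α.Char) : Hprf α 𝒜 ((Formula.dia x (A.imp B)).imp ((Formula.box x A).imp (Formula.dia x B)))
  | axSer (x : α.Char) (A : Formula α.Char) (h : Ax.ser x ∈ 𝒜) : Hprf α 𝒜 ((Formula.box x A).imp (Formula.dia x A))
  | axIpa (x : α.Char) (s : List α.Char) (A : Formula α.Char) (h : Ax.ipa x s ∈ 𝒜) :
      Hprf α 𝒜 (((dias s A).imp (Formula.dia x A)).and ((Formula.box x A).imp (boxes s A)))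
  | mp (A B : Formula α.Char) : Hprf α 𝒜 (A.imp B) → Hprf α 𝒜 A → Hprf α 𝒜 B
  | nec (x : α.Char) (A : Formula α.Char) : Hprf α 𝒜 A → Hprf α 𝒜 (Formula.box x A)

/-- `B₁ ∧ ⋯ ∧ Bₙ` (left-nested). -/
def conjList {C : Type} : Formula C → List (Formula C) → Formula C
  | A, [] => A
  | A, B :: L => conjList (A.and B) L

/-- `𝒮 ⊢_𝒜 A`: either `A ∈ IK_m(Σ,𝒜)` or `B₁∧⋯∧Bₙ ⊃ A ∈ IK_m(Σ,𝒜)` for some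
`B₁,…,Bₙ ∈ 𝒮`. -/
def HderivFrom (α : Alphabet) (𝒜 : Set (Ax α.Char)) (S : Set (Formula α.Char))
    (A : Formula α.Char) : Prop :=
  Hprf α 𝒜 A ∨ ∃ B L, B ∈ S ∧ (∀ D ∈ L, D ∈ S) ∧ Hprf α 𝒜 ((conjList B L).imp A)

/-! ### Labeled sequents -/

/-- A relational atom `w R_x u`. -/
abbrev Rel (C : Type) := ℕ × C × ℕ
/-- A labeled formula `w : A`. -/
abbrev LF (C : Type) := ℕ × Formula C

def relLabels {C : Type} (R : Multiset (Rel C)) : Set ℕ :=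
  {l | ∃ a ∈ R, a.1 = l ∨ a.2.2 = l}

def lfLabels {C : Type} (Γ : Multiset (LF C)) : Set ℕ :=
  {l | ∃ b ∈ Γ, b.1 = l}

/-- `u` is fresh with respect to the sequent `R, Γ ⊢ v : ⋯`. -/
def freshIn {C : Type} (u : ℕ) (R : Multiset (Rel C)) (Γ : Multiset (LF C)) (v : ℕ) : Prop :=
  u ∉ relLabels R ∧ u ∉ lfLabels Γ ∧ u ≠ v

/-- `Chain s w u m`: the multiset `m` is a chain of relational atoms `w R_s u`
along the string `s` (with `w = u` and `m = 0` when `s = ε`). -/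
inductive Chain {C : Type} : List C → ℕ → ℕ → Multiset (Rel C) → Prop
  | nil (w : ℕ) : Chain [] w w 0
  | cons {x : C} {s : List C} {w v u : ℕ} {m : Multiset (Rel C)} :
      Chain s v u m → Chain (x :: s) w u ((w, x, v) ::ₘ m)

/-- The labeled calculus `L_Σ(𝒜)`, height-indexed: `LD α 𝒜 n R Γ w A` states
that the labeled sequent `R, Γ ⊢ w : A` has a proof of height at most `n`. -/
inductive LD (α : Alphabet) (𝒜 : Set (Ax α.Char)) :
    ℕ → Multiset (Rel α.Char) → Multiset (LF α.Char) → ℕ → Formula α.Char → Prop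
  | id (n : ℕ) (R : Multiset (Rel α.Char)) (Γ : Multiset (LF α.Char)) (w p : ℕ) : LD α 𝒜 n R ((w, Formula.atom p) ::ₘ Γ) w (Formula.atom p)
  | botL (n : ℕ) (R : Multiset (Rel α.Char)) (Γ : Multiset (LF α.Char)) (w u : ℕ) (A : Formula α.Char) : LD α 𝒜 n R ((w, Formula.bot) ::ₘ Γ) u A
  | orL {n : ℕ} {R : Multiset (Rel α.Char)} {Γ : Multiset (LF α.Char)} {w u : ℕ} {A B C : Formula α.Char} :
      LD α 𝒜 n R ((w, A) ::ₘ Γ) u C → LD α 𝒜 n R ((w, B) ::ₘ Γ) u C →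
      LD α 𝒜 (n + 1) R ((w, A.or B) ::ₘ Γ) u C
  | orR1 {n : ℕ} {R : Multiset (Rel α.Char)} {Γ : Multiset (LF α.Char)} {w : ℕ} {A B : Formula α.Char} : LD α 𝒜 n R Γ w A → LD α 𝒜 (n + 1) R Γ w (A.or B)
  | orR2 {n : ℕ} {R : Multiset (Rel α.Char)} {Γ : Multiset (LF α.Char)} {w : ℕ} {A B : Formula α.Char} : LD α 𝒜 n R Γ w B → LD α 𝒜 (n + 1) R Γ w (A.or B)
  | andL {n : ℕ} {R : Multiset (Rel α.Char)} {Γ : Multiset (LF α.Char)} {w u : ℕ} {A B C : Formula α.Char} :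
      LD α 𝒜 n R ((w, A) ::ₘ (w, B) ::ₘ Γ) u C →
      LD α 𝒜 (n + 1) R ((w, A.and B) ::ₘ Γ) u C
  | andR {n : ℕ} {R : Multiset (Rel α.Char)} {Γ : Multiset (LF α.Char)} {w : ℕ} {A B : Formula α.Char} :
      LD α 𝒜 n R Γ w A → LD α 𝒜 n R Γ w B → LD α 𝒜 (n + 1) R Γ w (A.and B)
  | impL {n : ℕ} {R : Multiset (Rel α.Char)} {Γ : Multiset (LF α.Char)} {w u : ℕ} {A B C : Formula α.Char} :
      LD α 𝒜 n R ((w, A.imp B) ::ₘ Γ) w A → LD α 𝒜 n R ((w, B) ::ₘ Γ) u C →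
      LD α 𝒜 (n + 1) R ((w, A.imp B) ::ₘ Γ) u C
  | impR {n : ℕ} {R : Multiset (Rel α.Char)} {Γ : Multiset (LF α.Char)} {w : ℕ} {A B : Formula α.Char} :
      LD α 𝒜 n R ((w, A) ::ₘ Γ) w B → LD α 𝒜 (n + 1) R Γ w (A.imp B)
  | diaL {n : ℕ} {R : Multiset (Rel α.Char)} {Γ : Multiset (LF α.Char)} {w u v : ℕ} {x : α.Char} {A B : Formula α.Char} (hf : freshIn u R ((w, Formula.dia x A) ::ₘ Γ) v) :
      LD α 𝒜 n ((w, x, u) ::ₘ R) ((u, A) ::ₘ Γ) v B →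
      LD α 𝒜 (n + 1) R ((w, Formula.dia x A) ::ₘ Γ) v B
  | diaR {n : ℕ} {R : Multiset (Rel α.Char)} {Γ : Multiset (LF α.Char)} {w u : ℕ} {x : α.Char} {A : Formula α.Char} :
      LD α 𝒜 n ((w, x, u) ::ₘ R) Γ u A →
      LD α 𝒜 (n + 1) ((w, x, u) ::ₘ R) Γ w (Formula.dia x A)
  | boxR {n : ℕ} {R : Multiset (Rel α.Char)} {Γ : Multiset (LF α.Char)} {w u : ℕ} {x : α.Char} {A : Formula α.Char} (hf : freshIn u R Γ w) :
      LD α 𝒜 n ((w, x, u) ::ₘ R) Γ u A → LD α 𝒜 (n + 1) R Γ w (Formula.box x A)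
  | boxL {n : ℕ} {R : Multiset (Rel α.Char)} {Γ : Multiset (LF α.Char)} {w u v : ℕ} {x : α.Char} {A C : Formula α.Char} :
      LD α 𝒜 n ((w, x, u) ::ₘ R) ((w, Formula.box x A) ::ₘ (u, A) ::ₘ Γ) v C →
      LD α 𝒜 (n + 1) ((w, x, u) ::ₘ R) ((w, Formula.box x A) ::ₘ Γ) v C
  | dx {n : ℕ} {R : Multiset (Rel α.Char)} {Γ : Multiset (LF α.Char)} {u v : ℕ} {x : α.Char} {A : Formula α.Char} (w : ℕ) (hax : Ax.ser x ∈ 𝒜) (hf : freshIn u R Γ v) :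
      LD α 𝒜 n ((w, x, u) ::ₘ R) Γ v A → LD α 𝒜 (n + 1) R Γ v A
  | isx {n : ℕ} {R : Multiset (Rel α.Char)} {Γ : Multiset (LF α.Char)} {w u v : ℕ} {s : List α.Char} {x : α.Char} {m : Multiset (Rel α.Char)} {A : Formula α.Char} (hax : Ax.ipa x s ∈ 𝒜) (hc : Chain s w u m) :
      LD α 𝒜 n ((w, x, u) ::ₘ (m + R)) Γ v A → LD α 𝒜 (n + 1) (m + R) Γ v A
  | cx {n : ℕ} {R : Multiset (Rel α.Char)} {Γ : Multiset (LF α.Char)} {w u v : ℕ} {x : α.Char} {A : Formula α.Char} :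
      LD α 𝒜 n ((w, x, u) ::ₘ (u, α.conv x, w) ::ₘ R) Γ v A →
      LD α 𝒜 (n + 1) ((w, x, u) ::ₘ R) Γ v A

/-- Derivability in `L_Σ(𝒜)`. -/
def LDeriv (α : Alphabet) (𝒜 : Set (Ax α.Char)) (R : Multiset (Rel α.Char))
    (Γ : Multiset (LF α.Char)) (w : ℕ) (A : Formula α.Char) : Prop :=
  ∃ n, LD α 𝒜 n R Γ w A

/-- (Σ,𝒜)-validity of a labeled sequent. -/
def SeqValid (α : Alphabet) (𝒜 : Set (Ax α.Char)) (R : Multiset (Rel α.Char))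
    (Γ : Multiset (LF α.Char)) (w : ℕ) (A : Formula α.Char) : Prop :=
  ∀ (M : BiModel α), AModel 𝒜 M → ∀ I : ℕ → M.W,
    (∀ a ∈ R, M.R a.2.1 (I a.1) (I a.2.2)) → (∀ b ∈ Γ, Sat M (I b.1) b.2) →
      Sat M (I w) A

/-! ### Grammars and propagation -/

/-- Converse of a string: `s̄ = x̄ₙ⋯x̄₁` for `s = x₁⋯xₙ`. -/
def convStr {C : Type} (cv : C → C) (s : List C) : List C := (s.map cv).reverse

/-- The 𝒜-grammar `g(𝒜)`. -/
def Gram (α : Alphabet) (𝒜 : Set (Ax α.Char)) : Set (α.Char × List α.Char) :=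
  {p | Ax.ipa p.1 p.2 ∈ 𝒜 ∨
        ∃ x s, Ax.ipa x s ∈ 𝒜 ∧ p.1 = α.conv x ∧ p.2 = convStr α.conv s}

/-- One-step derivation between strings in a grammar. -/
def Step {C : Type} (g : Set (C × List C)) (s t : List C) : Prop :=
  ∃ s₁ s₂ x r, (x, r) ∈ g ∧ s = s₁ ++ x :: s₂ ∧ t = s₁ ++ r ++ s₂

/-- The language of the character `x` relative to a grammar. -/
def Lang {C : Type} (g : Set (C × List C)) (x : C) : Set (List C) :=
  {t | Relation.ReflTransGen (Step g) [x] t}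

/-- An edge of the propagation graph `PG(R)`. -/
def PGEdge (α : Alphabet) (R : Multiset (Rel α.Char)) (a : ℕ) (x : α.Char) (b : ℕ) : Prop :=
  (a, x, b) ∈ R ∨ (b, α.conv x, a) ∈ R

/-- `PPath α R w u s`: there is a propagation path from `w` to `u` in `PG(R)`
whose string is `s`. -/
inductive PPath (α : Alphabet) (R : Multiset (Rel α.Char)) : ℕ → ℕ → List α.Char → Prop
  | nil (w : ℕ) : PPath α R w w []
  | cons {w v u : ℕ} {x : α.Char} {s : List α.Char} :
      PGEdge α R w x v → PPath α R v u s → PPath α R w u (x :: s)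

/-- Side condition of the propagation rules: there exists a propagation path
`π(w,u)` in `PG(R)` with `s_π(w,u) ∈ L_{g(𝒜)}(x)`. -/
def CanProp (α : Alphabet) (𝒜 : Set (Ax α.Char)) (R : Multiset (Rel α.Char))
    (w u : ℕ) (x : α.Char) : Prop :=
  ∃ s, PPath α R w u s ∧ s ∈ Lang (Gram α 𝒜) x

/-- The refined labeled calculus `L*_Σ(𝒜)`, height-indexed. -/
inductive LDs (α : Alphabet) (𝒜 : Set (Ax α.Char)) :
    ℕ → Multiset (Rel α.Char) → Multiset (LF α.Char) → ℕ → Formula α.Char → Prop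
  | id (n : ℕ) (R : Multiset (Rel α.Char)) (Γ : Multiset (LF α.Char)) (w p : ℕ) : LDs α 𝒜 n R ((w, Formula.atom p) ::ₘ Γ) w (Formula.atom p)
  | botL (n : ℕ) (R : Multiset (Rel α.Char)) (Γ : Multiset (LF α.Char)) (w u : ℕ) (A : Formula α.Char) : LDs α 𝒜 n R ((w, Formula.bot) ::ₘ Γ) u A
  | orL {n : ℕ} {R : Multiset (Rel α.Char)} {Γ : Multiset (LF α.Char)} {w u : ℕ} {A B C : Formula α.Char} :
      LDs α 𝒜 n R ((w, A) ::ₘ Γ) u C → LDs α 𝒜 n R ((w, B) ::ₘ Γ) u C →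
      LDs α 𝒜 (n + 1) R ((w, A.or B) ::ₘ Γ) u C
  | orR1 {n : ℕ} {R : Multiset (Rel α.Char)} {Γ : Multiset (LF α.Char)} {w : ℕ} {A B : Formula α.Char} : LDs α 𝒜 n R Γ w A → LDs α 𝒜 (n + 1) R Γ w (A.or B)
  | orR2 {n : ℕ} {R : Multiset (Rel α.Char)} {Γ : Multiset (LF α.Char)} {w : ℕ} {A B : Formula α.Char} : LDs α 𝒜 n R Γ w B → LDs α 𝒜 (n + 1) R Γ w (A.or B)
  | andL {n : ℕ} {R : Multiset (Rel α.Char)} {Γ : Multiset (LF α.Char)} {w u : ℕ} {A B C : Formula α.Char} :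
      LDs α 𝒜 n R ((w, A) ::ₘ (w, B) ::ₘ Γ) u C →
      LDs α 𝒜 (n + 1) R ((w, A.and B) ::ₘ Γ) u C
  | andR {n : ℕ} {R : Multiset (Rel α.Char)} {Γ : Multiset (LF α.Char)} {w : ℕ} {A B : Formula α.Char} :
      LDs α 𝒜 n R Γ w A → LDs α 𝒜 n R Γ w B → LDs α 𝒜 (n + 1) R Γ w (A.and B)
  | impL {n : ℕ} {R : Multiset (Rel α.Char)} {Γ : Multiset (LF α.Char)} {w u : ℕ} {A B C : Formula α.Char} :
      LDs α 𝒜 n R ((w, A.imp B) ::ₘ Γ) w A → LDs α 𝒜 n R ((w, B) ::ₘ Γ) u C →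
      LDs α 𝒜 (n + 1) R ((w, A.imp B) ::ₘ Γ) u C
  | impR {n : ℕ} {R : Multiset (Rel α.Char)} {Γ : Multiset (LF α.Char)} {w : ℕ} {A B : Formula α.Char} :
      LDs α 𝒜 n R ((w, A) ::ₘ Γ) w B → LDs α 𝒜 (n + 1) R Γ w (A.imp B)
  | diaL {n : ℕ} {R : Multiset (Rel α.Char)} {Γ : Multiset (LF α.Char)} {w u v : ℕ} {x : α.Char} {A B : Formula α.Char} (hf : freshIn u R ((w, Formula.dia x A) ::ₘ Γ) v) :
      LDs α 𝒜 n ((w, x, u) ::ₘ R) ((u, A) ::ₘ Γ) v B →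
      LDs α 𝒜 (n + 1) R ((w, Formula.dia x A) ::ₘ Γ) v B
  | boxR {n : ℕ} {R : Multiset (Rel α.Char)} {Γ : Multiset (LF α.Char)} {w u : ℕ} {x : α.Char} {A : Formula α.Char} (hf : freshIn u R Γ w) :
      LDs α 𝒜 n ((w, x, u) ::ₘ R) Γ u A → LDs α 𝒜 (n + 1) R Γ w (Formula.box x A)
  | dx {n : ℕ} {R : Multiset (Rel α.Char)} {Γ : Multiset (LF α.Char)} {u v : ℕ} {x : α.Char} {A : Formula α.Char} (w : ℕ) (hax : Ax.ser x ∈ 𝒜) (hf : freshIn u R Γ v) :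
      LDs α 𝒜 n ((w, x, u) ::ₘ R) Γ v A → LDs α 𝒜 (n + 1) R Γ v A
  | pdia {n : ℕ} {R : Multiset (Rel α.Char)} {Γ : Multiset (LF α.Char)} {u : ℕ} {x : α.Char} {A : Formula α.Char} (w : ℕ) (h : CanProp α 𝒜 R w u x) :
      LDs α 𝒜 n R Γ u A → LDs α 𝒜 (n + 1) R Γ w (Formula.dia x A)
  | pbox {n : ℕ} {R : Multiset (Rel α.Char)} {Γ : Multiset (LF α.Char)} {w u v : ℕ} {x : α.Char} {A B : Formula α.Char} (h : CanProp α 𝒜 R w u x) :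
      LDs α 𝒜 n R ((w, Formula.box x A) ::ₘ (u, A) ::ₘ Γ) v B →
      LDs α 𝒜 (n + 1) R ((w, Formula.box x A) ::ₘ Γ) v B

/-- Derivability in `L*_Σ(𝒜)`. -/
def LDerivS (α : Alphabet) (𝒜 : Set (Ax α.Char)) (R : Multiset (Rel α.Char))
    (Γ : Multiset (LF α.Char)) (w : ℕ) (A : Formula α.Char) : Prop :=
  ∃ n, LDs α 𝒜 n R Γ w A

/-! ### Label substitutions -/

/-- `subL v u l`: replace the label `v` by `u`. -/
def subL (v u l : ℕ) : ℕ := if l = v then u else l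

def subR {C : Type} (v u : ℕ) (R : Multiset (Rel C)) : Multiset (Rel C) :=
  R.map (fun a => (subL v u a.1, a.2.1, subL v u a.2.2))

def subG {C : Type} (v u : ℕ) (Γ : Multiset (LF C)) : Multiset (LF C) :=
  Γ.map (fun b => (subL v u b.1, b.2))

/-! ### Double-negation translations -/

/-- The double-negation translation on `L_Σ`. -/
def dnt {C : Type} : Formula C → Formula C
  | Formula.atom p => ((Formula.atom p).neg).neg
  | Formula.bot => ((Formula.bot : Formula C).neg).neg
  | Formula.or A B => (((dnt A).neg).and ((dnt B).neg)).neg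
  | Formula.and A B => (dnt A).and (dnt B)
  | Formula.imp A B => (dnt A).imp (dnt B)
  | Formula.dia x A => (Formula.box x ((dnt A).neg)).neg
  | Formula.box x A => Formula.box x (dnt A)

/-! ### The classical language and calculi -/

/-- Formulae of the classical language `L^C_Σ` (negation normal form). -/
inductive CForm (C : Type) : Type
  | pos : ℕ → CForm C
  | neg : ℕ → CForm C
  | or  : CForm C → CForm C → CForm C
  | and : CForm C → CForm C → CForm C
  | dia : C → CForm C → CForm C
  | box : C → CForm C → CForm C

/-- Classical negation, recursively extended to all formulae of `L^C_Σ`. -/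
def cneg {C : Type} : CForm C → CForm C
  | CForm.pos p => CForm.neg p
  | CForm.neg p => CForm.pos p
  | CForm.or A B => CForm.and (cneg A) (cneg B)
  | CForm.and A B => CForm.or (cneg A) (cneg B)
  | CForm.dia x A => CForm.box x (cneg A)
  | CForm.box x A => CForm.dia x (cneg A)

/-- `⊥ := p ∧ ¬p` for a fixed propositional atom. -/
def cbot {C : Type} : CForm C := CForm.and (CForm.pos 0) (CForm.neg 0)

/-- `A ⊃ B := ¬A ∨ B`. -/
def cimp {C : Type} (A B : CForm C) : CForm C := CForm.or (cneg A) B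

/-- Reading a formula of `L_Σ` as a formula of `L^C_Σ`. -/
def toC {C : Type} : Formula C → CForm C
  | Formula.atom p => CForm.pos p
  | Formula.bot => cbot
  | Formula.or A B => CForm.or (toC A) (toC B)
  | Formula.and A B => CForm.and (toC A) (toC B)
  | Formula.imp A B => cimp (toC A) (toC B)
  | Formula.dia x A => CForm.dia x (toC A)
  | Formula.box x A => CForm.box x (toC A)

/-- A classical labeled formula. -/
abbrev CLF (C : Type) := ℕ × CForm C

def clfLabels {C : Type} (Γ : Multiset (CLF C)) : Set ℕ :=
  {l | ∃ b ∈ Γ, b.1 = l}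

/-- The refined labeled calculus `L^C_Σ(𝒜)` for the corresponding classical
grammar logic, operating on one-sided sequents `R ⊢ Γ`. -/
inductive CLD (α : Alphabet) (𝒜 : Set (Ax α.Char)) :
    Multiset (Rel α.Char) → Multiset (CLF α.Char) → Prop
  | id (R : Multiset (Rel α.Char)) (Γ : Multiset (CLF α.Char)) (w p : ℕ) :
      CLD α 𝒜 R ((w, CForm.pos p) ::ₘ (w, CForm.neg p) ::ₘ Γ)
  | orR {R : Multiset (Rel α.Char)} {Γ : Multiset (CLF α.Char)} {w : ℕ}
      {A B : CForm α.Char} :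
      CLD α 𝒜 R ((w, A) ::ₘ (w, B) ::ₘ Γ) → CLD α 𝒜 R ((w, CForm.or A B) ::ₘ Γ)
  | andR {R : Multiset (Rel α.Char)} {Γ : Multiset (CLF α.Char)} {w : ℕ}
      {A B : CForm α.Char} :
      CLD α 𝒜 R ((w, A) ::ₘ Γ) → CLD α 𝒜 R ((w, B) ::ₘ Γ) →
      CLD α 𝒜 R ((w, CForm.and A B) ::ₘ Γ)
  | boxR {R : Multiset (Rel α.Char)} {Γ : Multiset (CLF α.Char)} {w u : ℕ}
      {x : α.Char} {A : CForm α.Char}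
      (hf : u ∉ relLabels R ∧ u ∉ clfLabels ((w, CForm.box x A) ::ₘ Γ)) :
      CLD α 𝒜 ((w, x, u) ::ₘ R) ((u, A) ::ₘ Γ) →
      CLD α 𝒜 R ((w, CForm.box x A) ::ₘ Γ)
  | dx {R : Multiset (Rel α.Char)} {Γ : Multiset (CLF α.Char)} {u : ℕ}
      {x : α.Char} (w : ℕ) (hax : Ax.ser x ∈ 𝒜)
      (hf : u ∉ relLabels R ∧ u ∉ clfLabels Γ) :
      CLD α 𝒜 ((w, x, u) ::ₘ R) Γ → CLD α 𝒜 R Γ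
  | diaR {R : Multiset (Rel α.Char)} {Γ : Multiset (CLF α.Char)} {w u : ℕ}
      {x : α.Char} {A : CForm α.Char} (h : CanProp α 𝒜 R w u x) :
      CLD α 𝒜 R ((w, CForm.dia x A) ::ₘ (u, A) ::ₘ Γ) →
      CLD α 𝒜 R ((w, CForm.dia x A) ::ₘ Γ)

/-- `⟨x₁⟩⋯⟨xₙ⟩A` in the classical language. -/
def cdias {C : Type} : List C → CForm C → CForm C
  | [], A => A
  | x :: s, A => CForm.dia x (cdias s A)

/-- The Hilbert system for the classical grammar logic `K_m(Σ,𝒜')` corresponding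
to `IK_m(Σ,𝒜)`: seriality axioms of `𝒜` are kept and each intuitionistic path
axiom contributes the path axiom `⟨x₁⟩⋯⟨xₙ⟩A ⊃ ⟨x⟩A`. -/
inductive Kprf (α : Alphabet) (𝒜 : Set (Ax α.Char)) : CForm α.Char → Prop
  | cpl1 (A B : CForm α.Char) : Kprf α 𝒜 (cimp A (cimp B A))
  | cpl2 (A B C : CForm α.Char) :
      Kprf α 𝒜 (cimp (cimp A (cimp B C)) (cimp (cimp A B) (cimp A C)))
  | cpl3 (A B : CForm α.Char) : Kprf α 𝒜 (cimp A (CForm.or A B))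
  | cpl4 (A B : CForm α.Char) : Kprf α 𝒜 (cimp B (CForm.or A B))
  | cpl5 (A B C : CForm α.Char) :
      Kprf α 𝒜 (cimp (cimp A C) (cimp (cimp B C) (cimp (CForm.or A B) C)))
  | cpl6 (A B : CForm α.Char) : Kprf α 𝒜 (cimp (CForm.and A B) A)
  | cpl7 (A B : CForm α.Char) : Kprf α 𝒜 (cimp (CForm.and A B) B)
  | cpl8 (A B : CForm α.Char) : Kprf α 𝒜 (cimp A (cimp B (CForm.and A B)))
  | cpl9 (A : CForm α.Char) : Kprf α 𝒜 (cimp cbot A)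
  | cpl10 (A : CForm α.Char) : Kprf α 𝒜 (CForm.or A (cneg A))
  | axK (x : α.Char) (A B : CForm α.Char) :
      Kprf α 𝒜 (cimp (CForm.box x (cimp A B)) (cimp (CForm.box x A) (CForm.box x B)))
  | axConv (x : α.Char) (A : CForm α.Char) :
      Kprf α 𝒜 (cimp A (CForm.box x (CForm.dia (α.conv x) A)))
  | axSer (x : α.Char) (A : CForm α.Char) (h : Ax.ser x ∈ 𝒜) :
      Kprf α 𝒜 (cimp (CForm.box x A) (CForm.dia x A))
  | axPath (x : α.Char) (s : List α.Char) (A : CForm α.Char) (h : Ax.ipa x s ∈ 𝒜) :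
      Kprf α 𝒜 (cimp (cdias s A) (CForm.dia x A))
  | mp (A B : CForm α.Char) : Kprf α 𝒜 (cimp A B) → Kprf α 𝒜 A → Kprf α 𝒜 B
  | nec (x : α.Char) (A : CForm α.Char) : Kprf α 𝒜 A → Kprf α 𝒜 (CForm.box x A)

/-- The double-negation translation from `L^C_Σ` into `L_Σ`. -/
def dntC {C : Type} : CForm C → Formula C
  | CForm.pos p => ((Formula.atom p).neg).neg
  | CForm.neg p => (((Formula.atom p).neg).neg).neg
  | CForm.or A B => (((dntC A).neg).and ((dntC B).neg)).neg
  | CForm.and A B => (dntC A).and (dntC B)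
  | CForm.dia x A => (Formula.box x ((dntC A).neg)).neg
  | CForm.box x A => Formula.box x (dntC A)

/-! ### Labeled tree sequents and derivation trees -/

/-- Reachability along the relational atoms of `R`. -/
def Reach {C : Type} (R : Multiset (Rel C)) (a b : ℕ) : Prop :=
  Relation.ReflTransGen (fun p q => ∃ x, (p, x, q) ∈ R) a b

/-- `R, Γ ⊢ w : ⋯` is a labeled tree sequent with root `r`. -/
def isTreeSeqRoot (α : Alphabet) (R : Multiset (Rel α.Char))
    (Γ : Multiset (LF α.Char)) (w r : ℕ) : Prop :=
  (R = 0 → r = w ∧ ∀ b ∈ Γ, b.1 = w) ∧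
  (R ≠ 0 →
    (∀ a ∈ R, a.2.2 ≠ r) ∧
    (∀ l : ℕ, l ≠ r → (R.filter (fun a => a.2.2 = l)).card ≤ 1) ∧
    (∀ l ∈ relLabels R, Reach R r l) ∧
    (∀ b ∈ Γ, b.1 ∈ relLabels R) ∧ w ∈ relLabels R)

/-- Proof trees (derivations) in the refined labeled calculus `L*_Σ(𝒜)`. -/
inductive DTree (α : Alphabet) (𝒜 : Set (Ax α.Char)) :
    Multiset (Rel α.Char) → Multiset (LF α.Char) → ℕ → Formula α.Char → Type
  | id (R : Multiset (Rel α.Char)) (Γ : Multiset (LF α.Char)) (w p : ℕ) :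
      DTree α 𝒜 R ((w, Formula.atom p) ::ₘ Γ) w (Formula.atom p)
  | botL (R : Multiset (Rel α.Char)) (Γ : Multiset (LF α.Char)) (w u : ℕ)
      (A : Formula α.Char) : DTree α 𝒜 R ((w, Formula.bot) ::ₘ Γ) u A
  | orL (R : Multiset (Rel α.Char)) (Γ : Multiset (LF α.Char)) (w u : ℕ)
      (A B C : Formula α.Char) :
      DTree α 𝒜 R ((w, A) ::ₘ Γ) u C → DTree α 𝒜 R ((w, B) ::ₘ Γ) u C →
      DTree α 𝒜 R ((w, A.or B) ::ₘ Γ) u C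
  | orR1 (R : Multiset (Rel α.Char)) (Γ : Multiset (LF α.Char)) (w : ℕ)
      (A B : Formula α.Char) : DTree α 𝒜 R Γ w A → DTree α 𝒜 R Γ w (A.or B)
  | orR2 (R : Multiset (Rel α.Char)) (Γ : Multiset (LF α.Char)) (w : ℕ)
      (A B : Formula α.Char) : DTree α 𝒜 R Γ w B → DTree α 𝒜 R Γ w (A.or B)
  | andL (R : Multiset (Rel α.Char)) (Γ : Multiset (LF α.Char)) (w u : ℕ)
      (A B C : Formula α.Char) :
      DTree α 𝒜 R ((w, A) ::ₘ (w, B) ::ₘ Γ) u C →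
      DTree α 𝒜 R ((w, A.and B) ::ₘ Γ) u C
  | andR (R : Multiset (Rel α.Char)) (Γ : Multiset (LF α.Char)) (w : ℕ)
      (A B : Formula α.Char) :
      DTree α 𝒜 R Γ w A → DTree α 𝒜 R Γ w B → DTree α 𝒜 R Γ w (A.and B)
  | impL (R : Multiset (Rel α.Char)) (Γ : Multiset (LF α.Char)) (w u : ℕ)
      (A B C : Formula α.Char) :
      DTree α 𝒜 R ((w, A.imp B) ::ₘ Γ) w A → DTree α 𝒜 R ((w, B) ::ₘ Γ) u C →
      DTree α 𝒜 R ((w, A.imp B) ::ₘ Γ) u C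
  | impR (R : Multiset (Rel α.Char)) (Γ : Multiset (LF α.Char)) (w : ℕ)
      (A B : Formula α.Char) :
      DTree α 𝒜 R ((w, A) ::ₘ Γ) w B → DTree α 𝒜 R Γ w (A.imp B)
  | diaL (R : Multiset (Rel α.Char)) (Γ : Multiset (LF α.Char)) (w u v : ℕ)
      (x : α.Char) (A B : Formula α.Char)
      (hf : freshIn u R ((w, Formula.dia x A) ::ₘ Γ) v) :
      DTree α 𝒜 ((w, x, u) ::ₘ R) ((u, A) ::ₘ Γ) v B →
      DTree α 𝒜 R ((w, Formula.dia x A) ::ₘ Γ) v B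
  | boxR (R : Multiset (Rel α.Char)) (Γ : Multiset (LF α.Char)) (w u : ℕ)
      (x : α.Char) (A : Formula α.Char) (hf : freshIn u R Γ w) :
      DTree α 𝒜 ((w, x, u) ::ₘ R) Γ u A → DTree α 𝒜 R Γ w (Formula.box x A)
  | dx (R : Multiset (Rel α.Char)) (Γ : Multiset (LF α.Char)) (w u v : ℕ)
      (x : α.Char) (A : Formula α.Char) (hax : Ax.ser x ∈ 𝒜)
      (hf : freshIn u R Γ v) :
      DTree α 𝒜 ((w, x, u) ::ₘ R) Γ v A → DTree α 𝒜 R Γ v A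
  | pdia (R : Multiset (Rel α.Char)) (Γ : Multiset (LF α.Char)) (w u : ℕ)
      (x : α.Char) (A : Formula α.Char) (h : CanProp α 𝒜 R w u x) :
      DTree α 𝒜 R Γ u A → DTree α 𝒜 R Γ w (Formula.dia x A)
  | pbox (R : Multiset (Rel α.Char)) (Γ : Multiset (LF α.Char)) (w u v : ℕ)
      (x : α.Char) (A B : Formula α.Char) (h : CanProp α 𝒜 R w u x) :
      DTree α 𝒜 R ((w, Formula.box x A) ::ₘ (u, A) ::ₘ Γ) v B →
      DTree α 𝒜 R ((w, Formula.box x A) ::ₘ Γ) v B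

/-- `EverySeq P d`: every labeled sequent occurring in the derivation `d`
satisfies `P`. -/
def EverySeq {α : Alphabet} {𝒜 : Set (Ax α.Char)}
    (P : Multiset (Rel α.Char) → Multiset (LF α.Char) → ℕ → Formula α.Char → Prop) :
    ∀ {R : Multiset (Rel α.Char)} {Γ : Multiset (LF α.Char)} {w : ℕ}
      {A : Formula α.Char}, DTree α 𝒜 R Γ w A → Prop
  | _, _, _, _, DTree.id R Γ w p => P R ((w, Formula.atom p) ::ₘ Γ) w (Formula.atom p)
  | _, _, _, _, DTree.botL R Γ w u A => P R ((w, Formula.bot) ::ₘ Γ) u A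
  | _, _, _, _, DTree.orL R Γ w u A B C d1 d2 =>
      P R ((w, A.or B) ::ₘ Γ) u C ∧ EverySeq P d1 ∧ EverySeq P d2
  | _, _, _, _, DTree.orR1 R Γ w A B d => P R Γ w (A.or B) ∧ EverySeq P d
  | _, _, _, _, DTree.orR2 R Γ w A B d => P R Γ w (A.or B) ∧ EverySeq P d
  | _, _, _, _, DTree.andL R Γ w u A B C d =>
      P R ((w, A.and B) ::ₘ Γ) u C ∧ EverySeq P d
  | _, _, _, _, DTree.andR R Γ w A B d1 d2 =>
      P R Γ w (A.and B) ∧ EverySeq P d1 ∧ EverySeq P d2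
  | _, _, _, _, DTree.impL R Γ w u A B C d1 d2 =>
      P R ((w, A.imp B) ::ₘ Γ) u C ∧ EverySeq P d1 ∧ EverySeq P d2
  | _, _, _, _, DTree.impR R Γ w A B d => P R Γ w (A.imp B) ∧ EverySeq P d
  | _, _, _, _, DTree.diaL R Γ w u v x A B _ d =>
      P R ((w, Formula.dia x A) ::ₘ Γ) v B ∧ EverySeq P d
  | _, _, _, _, DTree.boxR R Γ w u x A _ d =>
      P R Γ w (Formula.box x A) ∧ EverySeq P d
  | _, _, _, _, DTree.dx R Γ w u v x A _ _ d => P R Γ v A ∧ EverySeq P d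
  | _, _, _, _, DTree.pdia R Γ w u x A _ d =>
      P R Γ w (Formula.dia x A) ∧ EverySeq P d
  | _, _, _, _, DTree.pbox R Γ w u v x A B _ d =>
      P R ((w, Formula.box x A) ::ₘ Γ) v B ∧ EverySeq P d

/-!
Weakening by relational atoms is admissible (together with closure under relabelling).
Consequently an atom `a R_x b` can be replaced by a chain of atoms from `a` to `b` along any
string of `L_{g(𝒜)}(x)`: a production `x ⟶ s` is an instance of `(i^s_x)` after weakening, and a
converse production `x̄ ⟶ s̄` reduces to one using `(c_x)`. Along a propagation path in `PG(R)` every atom of that chain is already an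
edge of `PG(R)`, and such atoms are deleted with `(c_x)`.
-/

section Labels

variable {C : Type}

def relMap (σ : ℕ → ℕ) (a : Rel C) : Rel C := (σ a.1, a.2.1, σ a.2.2)

def lfMap (σ : ℕ → ℕ) (b : LF C) : LF C := (σ b.1, b.2)

lemma relMap_id : relMap (C := C) id = id := rfl

lemma lfMap_id : lfMap (C := C) id = id := rfl

@[simp] lemma relMap_mk (σ : ℕ → ℕ) (a : ℕ) (x : C) (b : ℕ) :
    relMap σ (a, x, b) = (σ a, x, σ b) := rfl

@[simp] lemma lfMap_mk (σ : ℕ → ℕ) (a : ℕ) (A : Formula C) : lfMap σ (a, A) = (σ a, A) := rfl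

lemma mem_lfLabels_cons {p : LF C} {Γ : Multiset (LF C)} {l : ℕ} :
    l ∈ lfLabels (p ::ₘ Γ) ↔ p.1 = l ∨ l ∈ lfLabels Γ := by
  simp [lfLabels]

lemma relLabels_finite (R : Multiset (Rel C)) : (relLabels R).Finite :=
  (R.map Prod.fst + R.map (·.2.2)).toFinset.finite_toSet.subset <| by
    rintro l ⟨a, ha, rfl | rfl⟩ <;> simp only [Finset.mem_coe, Multiset.mem_toFinset,
      Multiset.mem_add, Multiset.mem_map] <;> [exact Or.inl ⟨a, ha, rfl⟩; exact Or.inr ⟨a, ha, rfl⟩]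

lemma lfLabels_finite (Γ : Multiset (LF C)) : (lfLabels Γ).Finite :=
  (Γ.map Prod.fst).toFinset.finite_toSet.subset <| by
    rintro l ⟨b, hb, rfl⟩
    simpa using ⟨b.2, hb⟩

lemma exists_freshIn (R : Multiset (Rel C)) (Γ : Multiset (LF C)) (v : ℕ) :
    ∃ u, freshIn u R Γ v := by
  obtain ⟨u, hu⟩ := ((relLabels_finite R).union ((lfLabels_finite Γ).insert v)).exists_notMem
  simp only [Set.mem_union, Set.mem_insert_iff, not_or] at hu
  exact ⟨u, hu.1, hu.2.2, hu.2.1⟩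

lemma map_relMap_update {R : Multiset (Rel C)} {u : ℕ} (h : u ∉ relLabels R)
    (σ : ℕ → ℕ) (e : ℕ) : R.map (relMap (Function.update σ u e)) = R.map (relMap σ) := by
  refine Multiset.map_congr rfl fun a ha => ?_
  have h1 : a.1 ≠ u := fun h' => h ⟨a, ha, Or.inl h'⟩
  have h2 : a.2.2 ≠ u := fun h' => h ⟨a, ha, Or.inr h'⟩
  simp [relMap, Function.update_of_ne h1, Function.update_of_ne h2]

lemma map_lfMap_update {Γ : Multiset (LF C)} {u : ℕ} (h : u ∉ lfLabels Γ)
    (σ : ℕ → ℕ) (e : ℕ) :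
    Γ.map (lfMap (Function.update σ u e)) = Γ.map (lfMap σ) := by
  refine Multiset.map_congr rfl fun b hb => ?_
  have h1 : b.1 ≠ u := fun h' => h ⟨b, hb, h'⟩
  simp only [lfMap, Function.update_of_ne h1]

lemma Chain.map_relMap {s : List C} {w u : ℕ} {m : Multiset (Rel C)} (h : Chain s w u m)
    (σ : ℕ → ℕ) : Chain s (σ w) (σ u) (m.map (relMap σ)) := by
  induction h with
  | nil w => exact Chain.nil _
  | cons _ ih => rw [Multiset.map_cons]; exact Chain.cons ih

end Labels

section Weakening

variable {α : Alphabet} {𝒜 : Set (Ax α.Char)}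

/-- Relabelling is needed even for plain weakening: in the rules with a fresh label, the
eigenvariable is first renamed to a label that is also fresh for the added atoms. -/
theorem LD.map_add {n : ℕ} {R : Multiset (Rel α.Char)} {Γ : Multiset (LF α.Char)} {w : ℕ}
    {A : Formula α.Char} (h : LD α 𝒜 n R Γ w A) (σ : ℕ → ℕ) (R₀ : Multiset (Rel α.Char)) :
    LD α 𝒜 n (R₀ + R.map (relMap σ)) (Γ.map (lfMap σ)) (σ w) A := by
  induction h generalizing σ R₀ <;>
    try simp only [Multiset.map_cons, Multiset.map_add, relMap_mk, lfMap_mk, Multiset.add_cons] at *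
  case id => exact LD.id ..
  case botL => exact LD.botL ..
  case orL ih₁ ih₂ => exact LD.orL (ih₁ σ R₀) (ih₂ σ R₀)
  case orR1 ih => exact LD.orR1 (ih σ R₀)
  case orR2 ih => exact LD.orR2 (ih σ R₀)
  case andL ih => exact LD.andL (ih σ R₀)
  case andR ih₁ ih₂ => exact LD.andR (ih₁ σ R₀) (ih₂ σ R₀)
  case impL ih₁ ih₂ => exact LD.impL (ih₁ σ R₀) (ih₂ σ R₀)
  case impR ih => exact LD.impR (ih σ R₀)
  case diaR ih => exact LD.diaR (ih σ R₀)
  case boxL ih => exact LD.boxL (ih σ R₀)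
  case cx ih => exact LD.cx (ih σ R₀)
  case isx R Γ w u v s x m A hax hc _ ih =>
    have := ih σ R₀
    rw [add_left_comm] at this ⊢
    exact LD.isx hax (hc.map_relMap σ) this
  case diaL R Γ w u v x A B hf _ ih =>
    obtain ⟨huR, huΓ, huv⟩ := hf
    obtain ⟨huw, huΓ⟩ : u ≠ w ∧ u ∉ lfLabels Γ := by
      simpa [mem_lfLabels_cons, eq_comm] using huΓ
    obtain ⟨e, he⟩ := exists_freshIn (R₀ + R.map (relMap σ))
      ((σ w, Formula.dia x A) ::ₘ Γ.map (lfMap σ)) (σ v)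
    have := ih (Function.update σ u e) R₀
    simp only [Function.update_self, Function.update_of_ne huw.symm,
      Function.update_of_ne huv.symm, map_relMap_update huR, map_lfMap_update huΓ] at this
    exact LD.diaL he this
  case boxR R Γ w u x A hf _ ih =>
    obtain ⟨huR, huΓ, huw⟩ := hf
    obtain ⟨e, he⟩ := exists_freshIn (R₀ + R.map (relMap σ)) (Γ.map (lfMap σ)) (σ w)
    have := ih (Function.update σ u e) R₀
    simp only [Function.update_self, Function.update_of_ne huw.symm,
      map_relMap_update huR, map_lfMap_update huΓ] at this
    exact LD.boxR he this
  case dx R Γ u v x A w hax hf _ ih =>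
    obtain ⟨huR, huΓ, huv⟩ := hf
    obtain ⟨e, he⟩ := exists_freshIn (R₀ + R.map (relMap σ)) (Γ.map (lfMap σ)) (σ v)
    have := ih (Function.update σ u e) R₀
    simp only [Function.update_self, Function.update_of_ne huv.symm,
      map_relMap_update huR, map_lfMap_update huΓ] at this
    exact LD.dx _ hax he this

theorem LDeriv.weaken {R : Multiset (Rel α.Char)} {Γ : Multiset (LF α.Char)} {w : ℕ}
    {A : Formula α.Char} (h : LDeriv α 𝒜 R Γ w A) (R₀ : Multiset (Rel α.Char)) :
    LDeriv α 𝒜 (R₀ + R) Γ w A := by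
  obtain ⟨n, h⟩ := h
  refine ⟨n, ?_⟩
  simpa [relMap_id, lfMap_id] using h.map_add id R₀

end Weakening

section Deletion

variable {α : Alphabet} {𝒜 : Set (Ax α.Char)}

lemma PGEdge.mono {R R' : Multiset (Rel α.Char)} {a b : ℕ} {x : α.Char}
    (h : PGEdge α R a x b) (hR : R ≤ R') : PGEdge α R' a x b :=
  h.imp (Multiset.mem_of_le hR) (Multiset.mem_of_le hR)

lemma LDeriv.of_cons_of_conv_mem {R : Multiset (Rel α.Char)} {Γ : Multiset (LF α.Char)}
    {c d w : ℕ} {y : α.Char} {A : Formula α.Char} (hR : (d, α.conv y, c) ∈ R)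
    (h : LDeriv α 𝒜 ((c, y, d) ::ₘ R) Γ w A) : LDeriv α 𝒜 R Γ w A := by
  obtain ⟨R₀, rfl⟩ := Multiset.exists_cons_of_mem hR
  obtain ⟨n, h⟩ := h
  rw [Multiset.cons_swap] at h
  exact ⟨n + 1, LD.cx (by rwa [α.conv_conv])⟩

/-- For a duplicate atom, the converse atom is added first so that `(c_x)` can delete both
copies. -/
lemma LDeriv.of_cons_of_pgEdge {R : Multiset (Rel α.Char)} {Γ : Multiset (LF α.Char)}
    {c d w : ℕ} {y : α.Char} {A : Formula α.Char} (hE : PGEdge α R c y d)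
    (h : LDeriv α 𝒜 ((c, y, d) ::ₘ R) Γ w A) : LDeriv α 𝒜 R Γ w A := by
  rcases hE with hmem | hconv
  · have h' := h.weaken {(d, α.conv y, c)}
    rw [Multiset.singleton_add, Multiset.cons_swap] at h'
    have h'' := h'.of_cons_of_conv_mem (Multiset.mem_cons_self _ _)
    refine h''.of_cons_of_conv_mem ?_
    rw [α.conv_conv]
    exact hmem
  · exact h.of_cons_of_conv_mem hconv

lemma LDeriv.of_add_of_pgEdge {m R : Multiset (Rel α.Char)} {Γ : Multiset (LF α.Char)} {w : ℕ}
    {A : Formula α.Char} (hm : ∀ a ∈ m, PGEdge α R a.1 a.2.1 a.2.2)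
    (h : LDeriv α 𝒜 (m + R) Γ w A) : LDeriv α 𝒜 R Γ w A := by
  induction m using Multiset.induction generalizing R with
  | empty => rwa [zero_add] at h
  | cons a m ih =>
    rw [Multiset.cons_add, ← Multiset.add_cons] at h
    refine LDeriv.of_cons_of_pgEdge (hm a (Multiset.mem_cons_self a m)) (ih (fun b hb => ?_) h)
    exact (hm b (Multiset.mem_cons_of_mem hb)).mono (Multiset.le_cons_self R a)

end Deletion

section Chains

variable {C : Type}

lemma Chain.append {s₁ s₂ : List C} {a c b : ℕ} {m₁ m₂ : Multiset (Rel C)}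
    (h₁ : Chain s₁ a c m₁) (h₂ : Chain s₂ c b m₂) : Chain (s₁ ++ s₂) a b (m₁ + m₂) := by
  induction h₁ with
  | nil => rwa [zero_add, List.nil_append]
  | cons _ ih => rw [Multiset.cons_add]; exact Chain.cons (ih h₂)

lemma Chain.exists_of_append {s₁ s₂ : List C} {a b : ℕ} {m : Multiset (Rel C)}
    (h : Chain (s₁ ++ s₂) a b m) :
    ∃ c m₁ m₂, Chain s₁ a c m₁ ∧ Chain s₂ c b m₂ ∧ m = m₁ + m₂ := by
  induction s₁ generalizing a m with
  | nil => exact ⟨a, 0, m, Chain.nil a, h, (zero_add m).symm⟩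
  | cons x s₁ ih =>
    obtain _ | ⟨h⟩ := h
    obtain ⟨c, m₁, m₂, h₁, h₂, rfl⟩ := ih h
    exact ⟨c, _, m₂, Chain.cons h₁, h₂, (Multiset.cons_add _ _ _).symm⟩

lemma Chain.singleton (x : C) (a b : ℕ) : Chain [x] a b {(a, x, b)} :=
  Chain.cons (Chain.nil b)

lemma Chain.eq_singleton {x : C} {a b : ℕ} {m : Multiset (Rel C)} (h : Chain [x] a b m) :
    m = {(a, x, b)} := by
  obtain _ | ⟨⟨⟩⟩ := h
  rfl

def convAtoms (cv : C → C) (m : Multiset (Rel C)) : Multiset (Rel C) :=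
  m.map fun a => (a.2.2, cv a.2.1, a.1)

lemma Chain.conv (cv : C → C) {s : List C} {a b : ℕ} {m : Multiset (Rel C)}
    (h : Chain s a b m) : Chain (convStr cv s) b a (convAtoms cv m) := by
  induction h with
  | nil w => exact Chain.nil w
  | @cons x s w v u m _ ih =>
    have := ih.append (Chain.singleton (cv x) v w)
    simpa [convStr, convAtoms, add_comm] using this

lemma convStr_convStr {cv : C → C} (hcv : Function.Involutive cv) (s : List C) :
    convStr cv (convStr cv s) = s := by
  simp [convStr, List.map_reverse, hcv.comp_self]

end Chains

section Replacement

variable {α : Alphabet} {𝒜 : Set (Ax α.Char)}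

lemma PPath.exists_chain {R : Multiset (Rel α.Char)} {a b : ℕ} {s : List α.Char}
    (h : PPath α R a b s) : ∃ m, Chain s a b m ∧ ∀ e ∈ m, PGEdge α R e.1 e.2.1 e.2.2 := by
  induction h with
  | nil w => exact ⟨0, Chain.nil w, by simp⟩
  | @cons w v u x s hE _ ih =>
    obtain ⟨m, hc, hm⟩ := ih
    refine ⟨(w, x, v) ::ₘ m, Chain.cons hc, fun e he => ?_⟩
    rcases Multiset.mem_cons.mp he with rfl | he
    exacts [hE, hm e he]

def Replaceable (α : Alphabet) (𝒜 : Set (Ax α.Char)) (m m' : Multiset (Rel α.Char)) : Prop :=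
  ∀ R Γ w A, LDeriv α 𝒜 (m + R) Γ w A → LDeriv α 𝒜 (m' + R) Γ w A

lemma Replaceable.trans {m m' m'' : Multiset (Rel α.Char)} (h : Replaceable α 𝒜 m m')
    (h' : Replaceable α 𝒜 m' m'') : Replaceable α 𝒜 m m'' :=
  fun R Γ w A hd => h' R Γ w A (h R Γ w A hd)

lemma Replaceable.add_left {m m' : Multiset (Rel α.Char)} (h : Replaceable α 𝒜 m m')
    (k : Multiset (Rel α.Char)) : Replaceable α 𝒜 (k + m) (k + m') := by
  intro R Γ w A hd
  rw [add_comm k, add_assoc] at hd ⊢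
  exact h _ Γ w A hd

lemma replaceable_of_pgEdge {m m' : Multiset (Rel α.Char)}
    (hm : ∀ e ∈ m, PGEdge α m' e.1 e.2.1 e.2.2) : Replaceable α 𝒜 m m' := by
  intro R Γ w A hd
  have := hd.weaken m'
  rw [add_left_comm] at this
  exact this.of_add_of_pgEdge fun e he => (hm e he).mono (Multiset.le_add_right m' R)

lemma replaceable_of_ipa {x : α.Char} {s : List α.Char} {a b : ℕ} {m : Multiset (Rel α.Char)}
    (hax : Ax.ipa x s ∈ 𝒜) (hc : Chain s a b m) : Replaceable α 𝒜 {(a, x, b)} m := by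
  intro R Γ w A hd
  obtain ⟨n, hd⟩ := hd.weaken m
  rw [add_left_comm, Multiset.singleton_add] at hd
  exact ⟨n + 1, LD.isx hax hc hd⟩

/-- The converse production `x̄ ⟶ s̄` is realised by turning `a R_x̄ b` around with `(c_x)`,
applying `(i^s_x)`, and turning the resulting chain along `s` from `b` to `a` around again. -/
lemma replaceable_of_gram {y : α.Char} {r : List α.Char} {a b : ℕ} {m : Multiset (Rel α.Char)}
    (hg : (y, r) ∈ Gram α 𝒜) (hc : Chain r a b m) : Replaceable α 𝒜 {(a, y, b)} m := by
  obtain hax | ⟨x, s, hax, rfl, rfl⟩ := hg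
  · exact replaceable_of_ipa hax hc
  have hcs : Chain s b a (convAtoms α.conv m) := by
    simpa [convStr_convStr α.conv_conv] using hc.conv α.conv
  have turn : Replaceable α 𝒜 {(a, α.conv x, b)} {(b, x, a)} :=
    replaceable_of_pgEdge fun e he => by
      rw [Multiset.mem_singleton.mp he]
      exact Or.inr (by simp [α.conv_conv])
  have turn_back : Replaceable α 𝒜 (convAtoms α.conv m) m :=
    replaceable_of_pgEdge fun e he => by
      obtain ⟨e', he', rfl⟩ := Multiset.mem_map.mp he
      exact Or.inr (by simpa [α.conv_conv] using he')
  exact turn.trans ((replaceable_of_ipa hax hcs).trans turn_back)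

lemma replaceable_of_mem_lang {x : α.Char} {t : List α.Char} {a b : ℕ}
    {m : Multiset (Rel α.Char)} (ht : t ∈ Lang (Gram α 𝒜) x) (hc : Chain t a b m) :
    Replaceable α 𝒜 {(a, x, b)} m := by
  induction ht generalizing m with
  | refl => rw [hc.eq_singleton]; exact fun _ _ _ _ => id
  | tail _ hstep ih =>
    obtain ⟨s₁, s₂, y, r, hg, rfl, rfl⟩ := hstep
    obtain ⟨c₂, m₁₂, m₃, h₁₂, h₃, rfl⟩ := hc.exists_of_append
    obtain ⟨c₁, m₁, m₂, h₁, h₂, rfl⟩ := h₁₂.exists_of_append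
    have hz := ih (h₁.append (Chain.cons h₃ : Chain (y :: s₂) c₁ b ((c₁, y, c₂) ::ₘ m₃)))
    have hprod := (replaceable_of_gram hg h₂).add_left (m₁ + m₃)
    rw [← Multiset.singleton_add, show ∀ k, m₁ + (k + m₃) = m₁ + m₃ + k by intro; abel] at hz
    rw [add_right_comm]
    exact hz.trans hprod

end Replacement

/-- **Deletion of grammar-redundant relational atoms**: if `R, uR_xv, Γ ⊢ w : A`
is derivable in `L_Σ(𝒜)` and there is a propagation path `π(u,v)` in `PG(R)`
with `s_π(u,v) ∈ L_{g(𝒜)}(x)`, then `R, Γ ⊢ w : A` is derivable in `L_Σ(𝒜)`. -/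
theorem delete_redundant_atom (α : Alphabet) (𝒜 : Set (Ax α.Char))
    (R : Multiset (Rel α.Char)) (Γ : Multiset (LF α.Char)) (u v w : ℕ)
    (x : α.Char) (A : Formula α.Char)
    (h1 : LDeriv α 𝒜 ((u, x, v) ::ₘ R) Γ w A)
    (h2 : CanProp α 𝒜 R u v x) :
    LDeriv α 𝒜 R Γ w A := by
  obtain ⟨s, hpath, hlang⟩ := h2
  obtain ⟨m, hchain, hedges⟩ := hpath.exists_chain
  have hrepl := replaceable_of_mem_lang hlang hchain R Γ w A
  rw [Multiset.singleton_add] at hrepl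
  exact (hrepl h1).of_add_of_pgEdge hedges

end IGL
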